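/- arXiv:math/0401260 — 2 statements merged into one kernel-verified Lean document; each statement's English description precedes it below -/
import Mathlib

section
/- Every configuration K_1, …, K_m of subspaces of V⊗W with positive integer weights ω_1, …, ω_m admits a unique Harder–Narasimhan filtration: there exists a unique chain of subspaces 0 = V⁰ ⊊ V¹ ⊊ ⋯ ⊊ Vʰ = V such that for each l = 1, …, h the quotient configuration of {K_i} on Vˡ/Vˡ⁻¹ is ℘_ω-semistable (as a configuration of subspaces of (Vˡ/Vˡ⁻¹)⊗W with the same weights ω), and the slopes μ_l = (1/(dim Vˡ − dim Vˡ⁻¹))·Σ_{i=1}^m ω_i·(dim(K_i ∩ (Vˡ⊗W)) − dim(K_i ∩ (Vˡ⁻¹⊗W))) are strictly decreasing: μ_1 > μ_2 > ⋯ > μ_h. -/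
open scoped TensorProduct
open Module

noncomputable section

variable {V : Type*} [AddCommGroup V] [Module ℂ V]

/-- The image of `H ⊗ W` in `V ⊗ W` under the canonical inclusion, for `H ⊆ V`. -/
def tensorSub (W : Type*) [AddCommGroup W] [Module ℂ W] (H : Submodule ℂ V) :
    Submodule ℂ (V ⊗[ℂ] W) :=
  LinearMap.range (TensorProduct.map H.subtype (LinearMap.id : W →ₗ[ℂ] W))

variable {W : Type*} [AddCommGroup W] [Module ℂ W]

/-- `℘_ω(H) = (1/dim H)·Σ_i ω_i·dim(K_i ∩ (H⊗W))`. -/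
def slopeConfig {m : ℕ} (ω : Fin m → ℕ) (K : Fin m → Submodule ℂ (V ⊗[ℂ] W))
    (H : Submodule ℂ V) : ℚ :=
  (∑ i, (ω i : ℚ) * (finrank ℂ ↥(K i ⊓ tensorSub W H) : ℚ)) / (finrank ℂ ↥H : ℚ)

/-- `℘_ω({K_i}) = (1/dim V)·Σ_i ω_i·dim K_i`. -/
def totalConfig {m : ℕ} (ω : Fin m → ℕ) (K : Fin m → Submodule ℂ (V ⊗[ℂ] W)) : ℚ :=
  (∑ i, (ω i : ℚ) * (finrank ℂ ↥(K i) : ℚ)) / (finrank ℂ V : ℚ)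

/-- The quotient configuration of `{K_i}` on `V''/V'` (for `V' ≤ V''`): the images of
`K_i ∩ (V''⊗W)` under the canonical map `(V⊗W) → (V/V')⊗W`, viewed inside `(V/V')⊗W`. -/
def quotConfig {m : ℕ} (K : Fin m → Submodule ℂ (V ⊗[ℂ] W)) (V' V'' : Submodule ℂ V) :
    Fin m → Submodule ℂ ((V ⧸ V') ⊗[ℂ] W) :=
  fun i => Submodule.map (TensorProduct.map V'.mkQ (LinearMap.id : W →ₗ[ℂ] W))
    (K i ⊓ tensorSub W V'')

/-- `℘_ω`-semistability of the quotient configuration on `V''/V'`, tested against nonzero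
proper subspaces of `V''/V'` (realized as submodules `S` of `V/V'` with `S < V''/V'`). -/
def QuotSemistable {m : ℕ} (ω : Fin m → ℕ) (K : Fin m → Submodule ℂ (V ⊗[ℂ] W))
    (V' V'' : Submodule ℂ V) : Prop :=
  ∀ S : Submodule ℂ (V ⧸ V'), S ≠ ⊥ → S < Submodule.map V'.mkQ V'' →
    (∑ i, (ω i : ℚ) * (finrank ℂ ↥(quotConfig K V' V'' i ⊓ tensorSub W S) : ℚ)) /
        (finrank ℂ ↥S : ℚ) ≤
      (∑ i, (ω i : ℚ) * (finrank ℂ ↥(quotConfig K V' V'' i) : ℚ)) /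
        (finrank ℂ ↥(Submodule.map V'.mkQ V'') : ℚ)

/-- The slope `μ` of the subquotient `V''/V'`:
`(Σ_i ω_i·(dim(K_i ∩ (V''⊗W)) − dim(K_i ∩ (V'⊗W)))) / (dim V'' − dim V')`. -/
def hnSlope {m : ℕ} (ω : Fin m → ℕ) (K : Fin m → Submodule ℂ (V ⊗[ℂ] W))
    (V' V'' : Submodule ℂ V) : ℚ :=
  (∑ i, (ω i : ℚ) * ((finrank ℂ ↥(K i ⊓ tensorSub W V'') : ℚ) -
      (finrank ℂ ↥(K i ⊓ tensorSub W V') : ℚ))) /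
    ((finrank ℂ ↥V'' : ℚ) - (finrank ℂ ↥V' : ℚ))

/-- `c` is a Harder–Narasimhan filtration of the configuration `{K_i}`. -/
def IsHNFiltration {W : Type*} [AddCommGroup W] [Module ℂ W] {m : ℕ} (ω : Fin m → ℕ)
    (K : Fin m → Submodule ℂ (V ⊗[ℂ] W)) {h : ℕ} (c : Fin (h + 1) → Submodule ℂ V) : Prop :=
  c 0 = ⊥ ∧ c (Fin.last h) = ⊤ ∧ StrictMono c ∧
    (∀ l : Fin h, QuotSemistable ω K (c l.castSucc) (c l.succ)) ∧
    (∀ l l' : Fin h, l < l' →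
      hnSlope ω K (c l'.castSucc) (c l'.succ) < hnSlope ω K (c l.castSucc) (c l.succ))

/-! Put `F(H) = Σ ω_i dim (K_i ∩ H⊗W)` and, for `U < X`, let the slope of `[U, X]` be
`(F X - F U) / (dim X - dim U)`. Since `H ↦ H⊗W` preserves intersections and dimension is
modular, `F` is supermodular; semistability of the quotient configuration on `V''/V'` says that
no `X` strictly between `V'` and `V''` has larger slope over `V'` than `V''` has.

Supermodularity makes the subspaces of maximal slope over `U` closed under `⊔`, so there is a
largest one, the maximal destabilizing subspace over `U`. Iterating it from `0` gives an HN
filtration. Conversely, if `U < D` is semistable and every step above `D` has smaller slope, then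
`D` is maximal destabilizing over `U`: split any `X > U` into `X ⊓ D`, bounded by semistability,
and `X ⊔ D`, bounded by the later slopes. By induction along the filtration, every HN filtration
is the iterated one. -/

def Supermodular {α : Type*} [Lattice α] (F : α → ℚ) : Prop :=
  ∀ A B, F A + F B ≤ F (A ⊔ B) + F (A ⊓ B)

section HarderNarasimhan

variable {k M : Type*} [Field k] [AddCommGroup M] [Module k M] (F : Submodule k M → ℚ)

def intervalSlope (U X : Submodule k M) : ℚ :=
  (F X - F U) / ((finrank k X : ℚ) - finrank k U)

def IsSemistableInterval (U D : Submodule k M) : Prop :=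
  ∀ X, U < X → X < D → intervalSlope F U X ≤ intervalSlope F U D

structure IsMaxDestabilizing (U D : Submodule k M) : Prop where
  lt : U < D
  intervalSlope_le : ∀ X, U < X → intervalSlope F U X ≤ intervalSlope F U D
  le_of_intervalSlope_eq : ∀ X, U < X → intervalSlope F U X = intervalSlope F U D → X ≤ D

structure IsHNChain {h : ℕ} (c : Fin (h + 1) → Submodule k M) : Prop where
  last : c (Fin.last h) = ⊤
  strictMono : StrictMono c
  semistable : ∀ l : Fin h, IsSemistableInterval F (c l.castSucc) (c l.succ)
  intervalSlope_strictAnti :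
    StrictAnti fun l : Fin h => intervalSlope F (c l.castSucc) (c l.succ)

variable {F} {U D X : Submodule k M} {s : ℚ}

lemma IsMaxDestabilizing.unique {D₁ D₂ : Submodule k M} (h₁ : IsMaxDestabilizing F U D₁)
    (h₂ : IsMaxDestabilizing F U D₂) : D₁ = D₂ := by
  have hs := le_antisymm (h₂.intervalSlope_le D₁ h₁.lt) (h₁.intervalSlope_le D₂ h₂.lt)
  exact le_antisymm (h₂.le_of_intervalSlope_eq D₁ h₁.lt hs)
    (h₁.le_of_intervalSlope_eq D₂ h₂.lt hs.symm)

lemma IsMaxDestabilizing.isSemistableInterval (h : IsMaxDestabilizing F U D) :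
    IsSemistableInterval F U D :=
  fun X hUX _ => h.intervalSlope_le X hUX

namespace IsHNChain

variable {h : ℕ}

lemma tail {c : Fin (h + 2) → Submodule k M} (hc : IsHNChain F c) :
    IsHNChain F (Fin.tail c) where
  last := by rw [Fin.tail, Fin.succ_last, hc.last]
  strictMono := hc.strictMono.comp Fin.strictMono_succ
  semistable l := by
    have := hc.semistable l.succ
    rwa [← Fin.succ_castSucc] at this
  intervalSlope_strictAnti a b hab := by
    have := hc.intervalSlope_strictAnti (Fin.succ_lt_succ_iff.2 hab)
    dsimp only at this
    rwa [← Fin.succ_castSucc, ← Fin.succ_castSucc] at this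

lemma eq_zero_iff {c : Fin (h + 1) → Submodule k M} (hc : IsHNChain F c) : h = 0 ↔ c 0 = ⊤ := by
  refine ⟨by rintro rfl; exact hc.last, fun h0 => ?_⟩
  by_contra hh
  obtain ⟨h, rfl⟩ := Nat.exists_eq_succ_of_ne_zero hh
  exact not_top_lt (h0 ▸ hc.strictMono Fin.zero_lt_one)

end IsHNChain

lemma isHNChain_const_top : IsHNChain F fun _ : Fin 1 => (⊤ : Submodule k M) where
  last := rfl
  strictMono := Fin.strictMono_iff_lt_succ.2 fun l => l.elim0
  semistable l := l.elim0
  intervalSlope_strictAnti l := l.elim0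

variable [FiniteDimensional k M]

lemma finrank_sub_finrank_pos (h : U < X) : 0 < (finrank k X : ℚ) - finrank k U := by
  rw [sub_pos]
  exact_mod_cast Submodule.finrank_lt_finrank_of_lt h

lemma intervalSlope_le_iff (h : U < X) :
    intervalSlope F U X ≤ s ↔ F X - F U ≤ s * ((finrank k X : ℚ) - finrank k U) :=
  div_le_iff₀ (finrank_sub_finrank_pos h)

lemma le_intervalSlope_iff (h : U < X) :
    s ≤ intervalSlope F U X ↔ s * ((finrank k X : ℚ) - finrank k U) ≤ F X - F U :=
  le_div_iff₀ (finrank_sub_finrank_pos h)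

lemma intervalSlope_lt_iff (h : U < X) :
    intervalSlope F U X < s ↔ F X - F U < s * ((finrank k X : ℚ) - finrank k U) :=
  div_lt_iff₀ (finrank_sub_finrank_pos h)

lemma sub_eq_intervalSlope_mul (h : U < X) :
    F X - F U = intervalSlope F U X * ((finrank k X : ℚ) - finrank k U) :=
  (div_mul_cancel₀ _ (finrank_sub_finrank_pos h).ne').symm

lemma sub_le_mul_of_forall_intervalSlope_le (hs : ∀ X, U < X → intervalSlope F U X ≤ s)
    (hUX : U ≤ X) : F X - F U ≤ s * ((finrank k X : ℚ) - finrank k U) := by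
  rcases hUX.lt_or_eq with h | rfl
  · exact (intervalSlope_le_iff h).1 (hs X h)
  · simp

lemma IsSemistableInterval.sub_le_mul (hss : IsSemistableInterval F U D) (hUD : U < D)
    (hUX : U ≤ X) (hXD : X ≤ D) :
    F X - F U ≤ intervalSlope F U D * ((finrank k X : ℚ) - finrank k U) := by
  rcases hUX.lt_or_eq with hUX | rfl
  · rcases hXD.lt_or_eq with hXD | rfl
    · exact (intervalSlope_le_iff hUX).1 (hss X hUX hXD)
    · exact (sub_eq_intervalSlope_mul hUD).le
  · simp

lemma finrank_sup_add_finrank_inf_eq_cast (A B : Submodule k M) :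
    (finrank k ↥(A ⊔ B) : ℚ) + finrank k ↥(A ⊓ B) = finrank k A + finrank k B := by
  exact_mod_cast Submodule.finrank_sup_add_finrank_inf_eq A B

lemma intervalSlope_sup_eq (hF : Supermodular F) (hs : ∀ X, U < X → intervalSlope F U X ≤ s)
    {A B : Submodule k M} (hA : U < A) (hB : U < B) (hsA : intervalSlope F U A = s)
    (hsB : intervalSlope F U B = s) : intervalSlope F U (A ⊔ B) = s := by
  have hAB : U < A ⊔ B := hA.trans_le le_sup_left
  refine le_antisymm (hs _ hAB) ((le_intervalSlope_iff hAB).2 ?_)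
  have hinf := sub_le_mul_of_forall_intervalSlope_le hs (le_inf hA.le hB.le)
  have hFA := sub_eq_intervalSlope_mul (F := F) hA
  have hFB := sub_eq_intervalSlope_mul (F := F) hB
  rw [hsA] at hFA
  rw [hsB] at hFB
  linear_combination hF A B + hinf - hFA - hFB + s * finrank_sup_add_finrank_inf_eq_cast A B

lemma exists_isMaxDestabilizing (hF : Supermodular F) (hfin : (Set.range F).Finite)
    (hU : U ≠ ⊤) : ∃ D, IsMaxDestabilizing F U D := by
  have hslopes : (intervalSlope F U '' {X | U < X}).Finite := by
    refine ((hfin.prod (Set.finite_Iic (finrank k M))).image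
      fun p : ℚ × ℕ => (p.1 - F U) / ((p.2 : ℚ) - finrank k U)).subset ?_
    rintro _ ⟨X, -, rfl⟩
    exact ⟨(F X, finrank k X), ⟨⟨X, rfl⟩, Submodule.finrank_le X⟩, rfl⟩
  obtain ⟨_, ⟨D₀, hUD₀, rfl⟩, hmax⟩ := Set.exists_max_image _ id hslopes
    ⟨_, ⊤, lt_top_iff_ne_top.2 hU, rfl⟩
  set s := intervalSlope F U D₀
  have hs : ∀ X, U < X → intervalSlope F U X ≤ s := fun X hUX => hmax _ ⟨X, hUX, rfl⟩
  obtain ⟨D, ⟨hUD, hsD⟩, hDmax⟩ :=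
    wellFounded_gt.has_min {X | U < X ∧ intervalSlope F U X = s} ⟨D₀, hUD₀, rfl⟩
  refine ⟨D, hUD, fun X hUX => hsD ▸ hs X hUX, fun X hUX hsX => ?_⟩
  have hXD : U < X ⊔ D ∧ intervalSlope F U (X ⊔ D) = s :=
    ⟨hUX.trans_le le_sup_left, intervalSlope_sup_eq hF hs hUX hUD (hsX.trans hsD) hsD⟩
  exact le_sup_left.trans ((le_sup_right.lt_or_eq.resolve_left (hDmax _ hXD)).ge)

lemma IsMaxDestabilizing.intervalSlope_lt (h : IsMaxDestabilizing F U D) (hDX : D < X) :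
    intervalSlope F D X < intervalSlope F U D := by
  by_contra! hle
  have hUX := h.lt.trans hDX
  have hFX := (le_intervalSlope_iff hDX).1 hle
  have hFD := sub_eq_intervalSlope_mul (F := F) h.lt
  have hs : intervalSlope F U D ≤ intervalSlope F U X :=
    (le_intervalSlope_iff hUX).2 (by linear_combination hFX - hFD)
  exact hDX.not_ge
    (h.le_of_intervalSlope_eq X hUX (le_antisymm (h.intervalSlope_le X hUX) hs))

lemma isMaxDestabilizing_of_isSemistableInterval (hF : Supermodular F) (hUD : U < D)
    (hss : IsSemistableInterval F U D)
    (hgap : ∀ X, D < X → intervalSlope F D X < intervalSlope F U D) :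
    IsMaxDestabilizing F U D := by
  set s := intervalSlope F U D
  have hlt : ∀ X, U < X → ¬X ≤ D → intervalSlope F U X < s := by
    intro X hUX hXD
    have hD : D < X ⊔ D := right_lt_sup.2 hXD
    have hlow := hss.sub_le_mul hUD (le_inf hUX.le hUD.le) inf_le_right
    have hhigh := (intervalSlope_lt_iff hD).1 (hgap _ hD)
    refine (intervalSlope_lt_iff hUX).2 ?_
    linear_combination hF X D + hlow + hhigh + s * finrank_sup_add_finrank_inf_eq_cast X D
  refine ⟨hUD, fun X hUX => ?_, fun X hUX hsX => ?_⟩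
  · by_cases hXD : X ≤ D
    · rcases hXD.lt_or_eq with hXD | rfl
      exacts [hss X hUX hXD, le_rfl]
    · exact (hlt X hUX hXD).le
  · by_contra hXD
    exact (hlt X hUX hXD).ne hsX

namespace IsHNChain

variable {h : ℕ}

lemma cons {c : Fin (h + 1) → Submodule k M} (hc : IsHNChain F c)
    (hU : IsMaxDestabilizing F U (c 0)) : IsHNChain F (Fin.cons U c : Fin (h + 2) → _) where
  last := by rw [← Fin.succ_last, Fin.cons_succ, hc.last]
  strictMono := Fin.strictMono_cons.2
    ⟨fun j => hU.lt.trans_le (hc.strictMono.monotone (Fin.zero_le j)), hc.strictMono⟩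
  semistable l := by
    cases l using Fin.cases with
    | zero =>
      rw [Fin.castSucc_zero, Fin.cons_zero, Fin.cons_succ]
      exact hU.isSemistableInterval
    | succ l =>
      rw [← Fin.succ_castSucc, Fin.cons_succ, Fin.cons_succ]
      exact hc.semistable l
  intervalSlope_strictAnti := by
    refine Fin.strictAnti_iff_succ_lt.2 fun l => ?_
    rcases h with _ | h
    · exact l.elim0
    cases l using Fin.cases with
    | zero =>
      simp only [Fin.succ_zero_eq_one, Fin.castSucc_zero, Fin.cons_zero, Fin.cons_succ]
      exact hU.intervalSlope_lt (hc.strictMono Fin.zero_lt_one)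
    | succ l =>
      simp only [← Fin.succ_castSucc, Fin.cons_succ]
      exact hc.intervalSlope_strictAnti (Fin.castSucc_lt_succ (i := l))

lemma isMaxDestabilizing_zero_one (hF : Supermodular F) {c : Fin (h + 2) → Submodule k M}
    (hc : IsHNChain F c) : IsMaxDestabilizing F (c 0) (c 1) := by
  have hss : IsSemistableInterval F (c 0) (c 1) := hc.semistable 0
  induction h with
  | zero =>
    exact isMaxDestabilizing_of_isSemistableInterval hF (hc.strictMono Fin.zero_lt_one) hss
      fun X hX => absurd (hc.last ▸ hX) not_top_lt
  | succ h ih =>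
    have htail : IsMaxDestabilizing F (c 1) (c 2) := ih hc.tail (hc.tail.semistable 0)
    have hlt : intervalSlope F (c 1) (c 2) < intervalSlope F (c 0) (c 1) := by
      simpa only [Fin.castSucc_zero, Fin.succ_zero_eq_one, Fin.castSucc_one, Fin.succ_one_eq_two]
        using hc.intervalSlope_strictAnti (Fin.zero_lt_one : (0 : Fin (h + 2)) < 1)
    exact isMaxDestabilizing_of_isSemistableInterval hF (hc.strictMono Fin.zero_lt_one) hss
      fun X hX => (htail.intervalSlope_le X hX).trans_lt hlt

lemma range_eq (hF : Supermodular F) {h' : ℕ} {c : Fin (h + 1) → Submodule k M}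
    {c' : Fin (h' + 1) → Submodule k M} (hc : IsHNChain F c) (hc' : IsHNChain F c')
    (h0 : c 0 = c' 0) : Set.range c = Set.range c' := by
  induction h generalizing h' c' with
  | zero =>
    obtain rfl : h' = 0 := hc'.eq_zero_iff.2 (h0 ▸ hc.last)
    rw [← Fin.cons_self_tail c, ← Fin.cons_self_tail c', Fin.range_cons, Fin.range_cons, h0,
      Set.range_eq_empty, Set.range_eq_empty]
  | succ h ih =>
    obtain ⟨h', rfl⟩ := Nat.exists_eq_succ_of_ne_zero
      fun hh => (hc.eq_zero_iff.not.1 h.succ_ne_zero) (h0 ▸ hc'.eq_zero_iff.1 hh)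
    have h1 : c 1 = c' 1 :=
      (hc.isMaxDestabilizing_zero_one hF).unique (h0 ▸ hc'.isMaxDestabilizing_zero_one hF)
    rw [← Fin.cons_self_tail c, ← Fin.cons_self_tail c', Fin.range_cons, Fin.range_cons, h0,
      ih hc.tail hc'.tail h1]

end IsHNChain

lemma exists_isHNChain (hF : Supermodular F) (hfin : (Set.range F).Finite) (U : Submodule k M) :
    ∃ (h : ℕ) (c : Fin (h + 1) → Submodule k M), c 0 = U ∧ IsHNChain F c := by
  induction U using WellFoundedGT.induction with
  | _ U ih =>
    by_cases hU : U = ⊤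
    · exact ⟨0, _, hU.symm, isHNChain_const_top⟩
    · obtain ⟨D, hD⟩ := exists_isMaxDestabilizing hF hfin hU
      obtain ⟨h, c, rfl, hc⟩ := ih _ hD.lt
      exact ⟨h + 1, Fin.cons U c, rfl, hc.cons hD⟩

end HarderNarasimhan

section TensorSub

lemma mem_tensorSub_iff {ι : Type*} [DecidableEq ι] (b : Basis ι ℂ W) {H : Submodule ℂ V}
    {x : V ⊗[ℂ] W} :
    x ∈ tensorSub W H ↔ ∀ j, TensorProduct.equivFinsuppOfBasisRight b x j ∈ H := by
  constructor
  · rintro ⟨y, rfl⟩ j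
    induction y using TensorProduct.induction_on with
    | zero => simp
    | tmul h w =>
      rw [TensorProduct.map_tmul, TensorProduct.equivFinsuppOfBasisRight_apply_tmul_apply]
      exact H.smul_mem _ h.2
    | add y z hy hz =>
      rw [map_add, map_add, Finsupp.add_apply]
      exact H.add_mem hy hz
  · intro hx
    rw [← (TensorProduct.equivFinsuppOfBasisRight b).symm_apply_apply x,
      TensorProduct.equivFinsuppOfBasisRight_symm_apply]
    exact Submodule.finsuppSum_mem _ _ _ _ fun j _ => ⟨(⟨_, hx j⟩ : H) ⊗ₜ[ℂ] b j, rfl⟩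

lemma tensorSub_mono {H₁ H₂ : Submodule ℂ V} (h : H₁ ≤ H₂) : tensorSub W H₁ ≤ tensorSub W H₂ := by
  classical
  intro x hx
  rw [mem_tensorSub_iff (Basis.ofVectorSpace ℂ W)] at hx ⊢
  exact fun j => h (hx j)

lemma tensorSub_inf (A B : Submodule ℂ V) :
    tensorSub W (A ⊓ B) = tensorSub W A ⊓ tensorSub W B := by
  classical
  ext x
  simp only [Submodule.mem_inf, mem_tensorSub_iff (Basis.ofVectorSpace ℂ W)]
  exact forall_and

lemma ker_map_mkQ_id (V' : Submodule ℂ V) :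
    LinearMap.ker (TensorProduct.map V'.mkQ (LinearMap.id : W →ₗ[ℂ] W)) = tensorSub W V' :=
  rTensor_mkQ W V'

lemma map_tensorSub {V₂ : Type*} [AddCommGroup V₂] [Module ℂ V₂] (φ : V →ₗ[ℂ] V₂)
    (H : Submodule ℂ V) :
    (tensorSub W H).map (TensorProduct.map φ (LinearMap.id : W →ₗ[ℂ] W)) =
      tensorSub W (H.map φ) := by
  rw [tensorSub, tensorSub, ← LinearMap.range_comp, ← TensorProduct.map_comp, LinearMap.id_comp]
  refine (LinearMap.rTensor_range W).trans ?_
  rw [LinearMap.range_comp, Submodule.range_subtype]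
  rfl

end TensorSub

section WeightedDim

variable {m : ℕ} (ω : Fin m → ℕ) (K : Fin m → Submodule ℂ (V ⊗[ℂ] W))

def weightedDim (H : Submodule ℂ V) : ℚ :=
  ∑ i, (ω i : ℚ) * finrank ℂ ↥(K i ⊓ tensorSub W H)

lemma hnSlope_eq_intervalSlope : hnSlope ω K = intervalSlope (weightedDim ω K) := by
  ext U X
  simp only [hnSlope, intervalSlope, weightedDim, mul_sub, Finset.sum_sub_distrib]

variable [FiniteDimensional ℂ V] [FiniteDimensional ℂ W]

lemma finrank_inf_tensorSub_supermodular (T : Submodule ℂ (V ⊗[ℂ] W)) (A B : Submodule ℂ V) :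
    finrank ℂ ↥(T ⊓ tensorSub W A) + finrank ℂ ↥(T ⊓ tensorSub W B) ≤
      finrank ℂ ↥(T ⊓ tensorSub W (A ⊔ B)) + finrank ℂ ↥(T ⊓ tensorSub W (A ⊓ B)) := by
  rw [← Submodule.finrank_sup_add_finrank_inf_eq, ← inf_inf_distrib_left, ← tensorSub_inf]
  exact Nat.add_le_add_right (Submodule.finrank_mono (sup_le
    (inf_le_inf_left _ (tensorSub_mono (W := W) (le_sup_left : A ≤ A ⊔ B)))
    (inf_le_inf_left _ (tensorSub_mono (W := W) (le_sup_right : B ≤ A ⊔ B))))) _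

lemma weightedDim_supermodular : Supermodular (weightedDim ω K) := by
  intro A B
  simp only [weightedDim, ← Finset.sum_add_distrib, ← mul_add]
  refine Finset.sum_le_sum fun i _ => mul_le_mul_of_nonneg_left ?_ (Nat.cast_nonneg _)
  exact_mod_cast finrank_inf_tensorSub_supermodular (K i) A B

lemma finite_range_weightedDim : (Set.range (weightedDim ω K)).Finite := by
  refine (Set.finite_range fun n : Fin m → Fin (finrank ℂ (V ⊗[ℂ] W) + 1) =>
    ∑ i, (ω i : ℚ) * (n i : ℕ)).subset ?_
  rintro _ ⟨H, rfl⟩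
  exact ⟨fun i => ⟨_, Nat.lt_succ_of_le (Submodule.finrank_le _)⟩, rfl⟩

end WeightedDim

lemma finrank_map_add_finrank_inf_ker {k M N : Type*} [Field k] [AddCommGroup M] [Module k M]
    [FiniteDimensional k M] [AddCommGroup N] [Module k N] (f : M →ₗ[k] N) (T : Submodule k M) :
    finrank k (T.map f) + finrank k ↥(T ⊓ LinearMap.ker f) = finrank k T := by
  rw [← LinearMap.range_domRestrict, ← Submodule.map_comap_subtype,
    Submodule.finrank_map_subtype_eq, ← LinearMap.ker_domRestrict]
  exact (f.domRestrict T).finrank_range_add_finrank_ker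

lemma map_inf_map_of_ker_le {k M N : Type*} [Field k] [AddCommGroup M] [Module k M]
    [AddCommGroup N] [Module k N] {f : M →ₗ[k] N} {A B : Submodule k M}
    (h : LinearMap.ker f ≤ B) : A.map f ⊓ B.map f = (A ⊓ B).map f := by
  rw [Submodule.map_inf_eq_map_inf_comap, Submodule.comap_map_eq_self h]

section Quotient

variable {m : ℕ} (ω : Fin m → ℕ) (K : Fin m → Submodule ℂ (V ⊗[ℂ] W)) {V' V'' H : Submodule ℂ V}

lemma map_mkQ_le_map_mkQ_iff {A B : Submodule ℂ V} (hB : V' ≤ B) :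
    A.map V'.mkQ ≤ B.map V'.mkQ ↔ A ≤ B := by
  rw [LinearMap.map_le_map_iff, Submodule.ker_mkQ, sup_eq_left.2 hB]

lemma map_mkQ_lt_map_mkQ_iff {A B : Submodule ℂ V} (hA : V' ≤ A) (hB : V' ≤ B) :
    A.map V'.mkQ < B.map V'.mkQ ↔ A < B := by
  rw [lt_iff_le_not_ge, lt_iff_le_not_ge, map_mkQ_le_map_mkQ_iff hB, map_mkQ_le_map_mkQ_iff hA]

lemma quotConfig_inf_tensorSub_map_mkQ_self (i : Fin m) :
    quotConfig K V' V'' i ⊓ tensorSub W (V''.map V'.mkQ) = quotConfig K V' V'' i :=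
  inf_eq_left.2 <| (Submodule.map_mono inf_le_right).trans (map_tensorSub _ _).le

lemma quotConfig_inf_tensorSub_map_mkQ (hV'H : V' ≤ H) (hHV'' : H ≤ V'') (i : Fin m) :
    quotConfig K V' V'' i ⊓ tensorSub W (H.map V'.mkQ) =
      (K i ⊓ tensorSub W H).map (TensorProduct.map V'.mkQ LinearMap.id) := by
  rw [quotConfig, ← map_tensorSub, map_inf_map_of_ker_le ((ker_map_mkQ_id V').trans_le
    (tensorSub_mono hV'H)), inf_assoc, inf_eq_right.2 (tensorSub_mono hHV'')]

variable [FiniteDimensional ℂ V] [FiniteDimensional ℂ W]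

lemma finrank_map_mkQ (hV'H : V' ≤ H) :
    (finrank ℂ ↥(H.map V'.mkQ) : ℚ) = finrank ℂ H - finrank ℂ V' := by
  have := finrank_map_add_finrank_inf_ker V'.mkQ H
  rw [Submodule.ker_mkQ, inf_eq_right.2 hV'H] at this
  rw [← this]
  push_cast
  ring

lemma sum_quotConfig_inf_tensorSub_map_mkQ (hV'H : V' ≤ H) (hHV'' : H ≤ V'') :
    ∑ i, (ω i : ℚ) * finrank ℂ ↥(quotConfig K V' V'' i ⊓ tensorSub W (H.map V'.mkQ)) =
      weightedDim ω K H - weightedDim ω K V' := by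
  simp only [weightedDim, ← Finset.sum_sub_distrib, ← mul_sub]
  refine Finset.sum_congr rfl fun i _ => congrArg _ ?_
  have := finrank_map_add_finrank_inf_ker (TensorProduct.map V'.mkQ LinearMap.id)
    (K i ⊓ tensorSub W H)
  rw [ker_map_mkQ_id, inf_assoc, inf_eq_right.2 (tensorSub_mono hV'H)] at this
  rw [quotConfig_inf_tensorSub_map_mkQ K hV'H hHV'', ← this]
  push_cast
  ring

lemma quotSemistable_iff (h : V' < V'') :
    QuotSemistable ω K V' V'' ↔ IsSemistableInterval (weightedDim ω K) V' V'' := by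
  have hslope : ∀ H, V' ≤ H → H ≤ V'' →
      (∑ i, (ω i : ℚ) * finrank ℂ ↥(quotConfig K V' V'' i ⊓ tensorSub W (H.map V'.mkQ))) /
        finrank ℂ ↥(H.map V'.mkQ) = intervalSlope (weightedDim ω K) V' H := fun H h₁ h₂ => by
    rw [sum_quotConfig_inf_tensorSub_map_mkQ ω K h₁ h₂, finrank_map_mkQ h₁, intervalSlope]
  have htotal : (∑ i, (ω i : ℚ) * finrank ℂ ↥(quotConfig K V' V'' i)) /
      finrank ℂ ↥(V''.map V'.mkQ) = intervalSlope (weightedDim ω K) V' V'' := by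
    rw [← hslope V'' h.le le_rfl]
    congr 1
    exact Finset.sum_congr rfl fun i _ => by rw [quotConfig_inf_tensorSub_map_mkQ_self]
  have hbot : (⊥ : Submodule ℂ (V ⧸ V')) = V'.map V'.mkQ := (Submodule.mkQ_map_self V').symm
  unfold QuotSemistable IsSemistableInterval
  rw [htotal]
  constructor
  · intro hq X h₁ h₂
    rw [← hslope X h₁.le h₂.le]
    refine hq _ ?_ ((map_mkQ_lt_map_mkQ_iff h₁.le h.le).2 h₂)
    rw [← bot_lt_iff_ne_bot, hbot]
    exact (map_mkQ_lt_map_mkQ_iff le_rfl h₁.le).2 h₁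
  · intro hs S hS hSV''
    set X := S.comap V'.mkQ
    have hX : X.map V'.mkQ = S := Submodule.map_comap_eq_of_surjective V'.mkQ_surjective S
    have hV'X : V' ≤ X := Submodule.ker_mkQ V' ▸ LinearMap.ker_le_comap _
    rw [← hX] at hS hSV'' ⊢
    rw [← bot_lt_iff_ne_bot, hbot, map_mkQ_lt_map_mkQ_iff le_rfl hV'X] at hS
    rw [map_mkQ_lt_map_mkQ_iff hV'X h.le] at hSV''
    rw [hslope X hV'X hSV''.le]
    exact hs X hS hSV''

lemma isHNFiltration_iff {h : ℕ} (c : Fin (h + 1) → Submodule ℂ V) :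
    IsHNFiltration ω K c ↔ c 0 = ⊥ ∧ IsHNChain (weightedDim ω K) c := by
  unfold IsHNFiltration
  rw [hnSlope_eq_intervalSlope]
  constructor
  · rintro ⟨h0, hlast, hmono, hss, hanti⟩
    exact ⟨h0, hlast, hmono,
      fun l => (quotSemistable_iff ω K (hmono (Fin.castSucc_lt_succ (i := l)))).1 (hss l), hanti⟩
  · rintro ⟨h0, ⟨hlast, hmono, hss, hanti⟩⟩
    exact ⟨h0, hlast, hmono,
      fun l => (quotSemistable_iff ω K (hmono (Fin.castSucc_lt_succ (i := l)))).2 (hss l), hanti⟩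

end Quotient

theorem stmt_9_general (V W : Type*) [AddCommGroup V] [Module ℂ V] [FiniteDimensional ℂ V]
    [AddCommGroup W] [Module ℂ W] [FiniteDimensional ℂ W]
    (m : ℕ) (ω : Fin m → ℕ)
    (K : Fin m → Submodule ℂ (V ⊗[ℂ] W)) :
    ∃ (h : ℕ) (c : Fin (h + 1) → Submodule ℂ V),
      IsHNFiltration ω K c ∧
      ∀ (h' : ℕ) (c' : Fin (h' + 1) → Submodule ℂ V),
        IsHNFiltration ω K c' → Set.range c' = Set.range c := by
  obtain ⟨h, c, hc0, hc⟩ :=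
    exists_isHNChain (weightedDim_supermodular ω K) (finite_range_weightedDim ω K) ⊥
  refine ⟨h, c, (isHNFiltration_iff ω K c).2 ⟨hc0, hc⟩, fun h' c' hc' => ?_⟩
  obtain ⟨hc'0, hc'⟩ := (isHNFiltration_iff ω K c').1 hc'
  exact hc'.range_eq (weightedDim_supermodular ω K) hc (hc'0.trans hc0.symm)

/-- existence and uniqueness of the Harder–Narasimhan filtration. -/
theorem stmt_9 (V W : Type*) [AddCommGroup V] [Module ℂ V] [FiniteDimensional ℂ V] [Nontrivial V]
    [AddCommGroup W] [Module ℂ W] [FiniteDimensional ℂ W] [Nontrivial W]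
    (m : ℕ) (hm : 1 ≤ m) (ω : Fin m → ℕ) (hω : ∀ i, 0 < ω i)
    (K : Fin m → Submodule ℂ (V ⊗[ℂ] W)) :
    ∃ (h : ℕ) (c : Fin (h + 1) → Submodule ℂ V),
      IsHNFiltration ω K c ∧
      ∀ (h' : ℕ) (c' : Fin (h' + 1) → Submodule ℂ V),
        IsHNFiltration ω K c' → Set.range c' = Set.range c :=
  stmt_9_general V W m ω K
end
end

section
/- Let ω_1, …, ω_m be positive integers. (a) If V_1, …, V_m are 2-dimensional subspaces of ℂ⁴ with V_i ∩ V_j = 0 for all i ≠ j, and ω_i ≤ (1/2)·Σ_{j=1}^m ω_j for every i, then the configuration {V_i} is ℘_ω-semistable. (b) Consequently, there exists a ℘_ω-semistable configuration of m two-dimensional subspaces of ℂ⁴ if and only if ω_i ≤ (1/2)·Σ_{j=1}^m ω_j for every i. -/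
open Module

noncomputable section

variable {V : Type*} [AddCommGroup V] [Module ℂ V]

/-- `℘_ω(H) = (1/dim H)·Σ_i ω_i·dim(V_i ∩ H)` for a configuration of subspaces of `V`. -/
def slopeSub {m : ℕ} (ω : Fin m → ℕ) (Vc : Fin m → Submodule ℂ V) (H : Submodule ℂ V) : ℚ :=
  (∑ i, (ω i : ℚ) * (finrank ℂ ↥(Vc i ⊓ H) : ℚ)) / (finrank ℂ ↥H : ℚ)

/-- `℘_ω({V_i}) = (1/dim V)·Σ_i ω_i·dim V_i`. -/
def totalSub {m : ℕ} (ω : Fin m → ℕ) (Vc : Fin m → Submodule ℂ V) : ℚ :=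
  (∑ i, (ω i : ℚ) * (finrank ℂ ↥(Vc i) : ℚ)) / (finrank ℂ V : ℚ)

/-- The configuration `{V_i}` is `℘_ω`-semistable. -/
def SubSemistable {m : ℕ} (ω : Fin m → ℕ) (Vc : Fin m → Submodule ℂ V) : Prop :=
  ∀ H : Submodule ℂ V, H ≠ ⊥ → H ≠ ⊤ → slopeSub ω Vc H ≤ totalSub ω Vc

/-- The configuration `{V_i}` is `℘_ω`-stable. -/
def SubStable {m : ℕ} (ω : Fin m → ℕ) (Vc : Fin m → Submodule ℂ V) : Prop :=
  ∀ H : Submodule ℂ V, H ≠ ⊥ → H ≠ ⊤ → slopeSub ω Vc H < totalSub ω Vc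

/-! If the `V_i` are pairwise transverse, so are the `V_i ∩ H` inside `H`, hence
`dim (V_i ∩ H) + dim (V_j ∩ H) ≤ dim H` for `i ≠ j`. So at most one index has
`dim (V_i ∩ H) > dim H / 2`, and the excess of that index is absorbed by `ω_i ≤ Σ ω / 2`,
giving `℘_ω(H) ≤ Σ ω / 2 = ℘_ω({V_i})`. Conversely, testing `H = V_i` gives `ω_i ≤ Σ ω / 2`,
and the graphs `{(x, t x)}` of distinct scalars `t` are pairwise transverse 2-planes in `ℂ⁴`. -/

open Function

lemma sum_mul_le_half_mul_sum {ι 𝕜 : Type*} [Fintype ι] [Field 𝕜] [LinearOrder 𝕜]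
    [IsStrictOrderedRing 𝕜] {w k : ι → 𝕜} {d : 𝕜} (hw : ∀ i, 0 ≤ w i)
    (hw_half : ∀ i, w i ≤ (∑ j, w j) / 2) (hk : Pairwise fun i j => k i + k j ≤ d) :
    ∑ i, w i * k i ≤ d * (∑ i, w i) / 2 := by
  classical
  by_cases hbig : ∃ i, d < 2 * k i
  · obtain ⟨i, hi⟩ := hbig
    set R := ∑ j ∈ Finset.univ.erase i, w j
    have hrest : ∑ j ∈ Finset.univ.erase i, w j * k j ≤ (d - k i) * R := by
      rw [Finset.mul_sum]
      refine Finset.sum_le_sum fun j hj => ?_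
      have := hk (Finset.ne_of_mem_erase hj)
      nlinarith [hw j]
    rw [← Finset.add_sum_erase _ _ (Finset.mem_univ i)] at hw_half ⊢
    rw [← Finset.add_sum_erase _ _ (Finset.mem_univ i)]
    -- the excess of the one large `k i` is paid for by `w i ≤ R`
    linarith [mul_nonneg (sub_nonneg.mpr hi.le) (sub_nonneg.mpr (hw_half i))]
  · simp only [not_exists, not_lt] at hbig
    rw [mul_comm, Finset.sum_mul, Finset.sum_div]
    exact Finset.sum_le_sum fun i _ => by nlinarith [hw i, hbig i]

lemma finrank_inf_add_finrank_inf_le {K W : Type*} [DivisionRing K] [AddCommGroup W] [Module K W]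
    [FiniteDimensional K W] {A B : Submodule K W} (hAB : Disjoint A B) (H : Submodule K W) :
    finrank K ↥(A ⊓ H) + finrank K ↥(B ⊓ H) ≤ finrank K H := by
  rw [← Submodule.finrank_sup_add_finrank_inf_eq, (hAB.mono inf_le_left inf_le_left).eq_bot,
    finrank_bot, add_zero]
  exact Submodule.finrank_mono (sup_le inf_le_right inf_le_right)

section Configuration

variable {m : ℕ} (ω : Fin m → ℕ) {Vc : Fin m → Submodule ℂ V}

lemma le_slopeSub_self {i : Fin m} (hi : finrank ℂ (Vc i) ≠ 0) :
    (ω i : ℚ) ≤ slopeSub ω Vc (Vc i) := by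
  rw [slopeSub, le_div_iff₀ (by positivity)]
  calc (ω i : ℚ) * finrank ℂ (Vc i) = ω i * finrank ℂ ↥(Vc i ⊓ Vc i) := by rw [inf_idem]
    _ ≤ ∑ j, (ω j : ℚ) * finrank ℂ ↥(Vc j ⊓ Vc i) :=
      Finset.single_le_sum (f := fun j => (ω j : ℚ) * finrank ℂ ↥(Vc j ⊓ Vc i))
        (fun j _ => by positivity) (Finset.mem_univ i)

variable [FiniteDimensional ℂ V]

lemma slopeSub_le_half_sum (hVc : Pairwise (Disjoint on Vc))
    (hω : ∀ i, (ω i : ℚ) ≤ (∑ j, (ω j : ℚ)) / 2) (H : Submodule ℂ V) :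
    slopeSub ω Vc H ≤ (∑ j, (ω j : ℚ)) / 2 := by
  refine div_le_of_le_mul₀ (Nat.cast_nonneg _) (by positivity) ?_
  have key := sum_mul_le_half_mul_sum (k := fun i => (finrank ℂ ↥(Vc i ⊓ H) : ℚ))
    (d := finrank ℂ H) (fun i => Nat.cast_nonneg (ω i)) hω
    fun i j hij => by exact_mod_cast finrank_inf_add_finrank_inf_le (hVc hij) H
  linarith

lemma totalSub_eq_half_sum [Nontrivial V] (hdim : ∀ i, 2 * finrank ℂ (Vc i) = finrank ℂ V) :
    totalSub ω Vc = (∑ j, (ω j : ℚ)) / 2 := by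
  have hV : (finrank ℂ V : ℚ) ≠ 0 := by exact_mod_cast Module.finrank_pos.ne'
  have hdimQ : ∀ i, (finrank ℂ (Vc i) : ℚ) = finrank ℂ V / 2 := fun i => by
    rw [← hdim i]; push_cast; ring
  simp only [totalSub, hdimQ, ← Finset.sum_mul]
  field_simp

theorem subSemistable_of_pairwise_disjoint (hdim : ∀ i, 2 * finrank ℂ (Vc i) = finrank ℂ V)
    (hVc : Pairwise (Disjoint on Vc)) (hω : ∀ i, (ω i : ℚ) ≤ (∑ j, (ω j : ℚ)) / 2) :
    SubSemistable ω Vc := by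
  intro H hH _
  obtain ⟨x, -, hx⟩ := Submodule.exists_mem_ne_zero_of_ne_bot hH
  have : Nontrivial V := nontrivial_of_ne x 0 hx
  rw [totalSub_eq_half_sum ω hdim]
  exact slopeSub_le_half_sum ω hVc hω H

theorem weight_le_half_sum_of_subSemistable [Nontrivial V]
    (hdim : ∀ i, 2 * finrank ℂ (Vc i) = finrank ℂ V) (hss : SubSemistable ω Vc) (i : Fin m) :
    (ω i : ℚ) ≤ (∑ j, (ω j : ℚ)) / 2 := by
  have hV := (Module.finrank_pos (R := ℂ) (M := V)).ne'
  have hi : finrank ℂ (Vc i) ≠ 0 := by have := hdim i; omega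
  have hbot : Vc i ≠ ⊥ := fun h => hi (by rw [h, finrank_bot])
  have htop : Vc i ≠ ⊤ := fun h => by have := hdim i; rw [h, finrank_top] at this; omega
  calc (ω i : ℚ) ≤ slopeSub ω Vc (Vc i) := le_slopeSub_self ω hi
    _ ≤ totalSub ω Vc := hss _ hbot htop
    _ = (∑ j, (ω j : ℚ)) / 2 := totalSub_eq_half_sum ω hdim

end Configuration

-- the graph of `x ↦ t • x` on `ℂ²`, inside `ℂ² × ℂ² = ℂ⁴`
def planeAt (t : ℂ) : Submodule ℂ (Fin 4 → ℂ) :=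
  Submodule.span ℂ (Set.range ![![1, 0, t, 0], ![0, 1, 0, t]])

lemma finrank_planeAt (t : ℂ) : finrank ℂ (planeAt t) = 2 := by
  refine (finrank_span_eq_card ?_).trans (Fintype.card_fin 2)
  refine LinearIndependent.pair_iff.mpr fun a b hab => ?_
  simpa using And.intro (congrFun hab 0) (congrFun hab 1)

lemma disjoint_planeAt {s t : ℂ} (hst : s ≠ t) : Disjoint (planeAt s) (planeAt t) := by
  rw [Submodule.disjoint_def]
  rintro x hs ht
  obtain ⟨a, rfl⟩ := (Submodule.mem_span_range_iff_exists_fun ℂ).mp hs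
  obtain ⟨b, hb⟩ := (Submodule.mem_span_range_iff_exists_fun ℂ).mp ht
  have h0 : b 0 = a 0 := by simpa [Fin.sum_univ_two] using congrFun hb 0
  have h1 : b 1 = a 1 := by simpa [Fin.sum_univ_two] using congrFun hb 1
  have h2 : b 0 * t = a 0 * s := by simpa [Fin.sum_univ_two] using congrFun hb 2
  have h3 : b 1 * t = a 1 * s := by simpa [Fin.sum_univ_two] using congrFun hb 3
  have ha : ∀ k, a k = 0 := by
    refine Fin.forall_fin_two.mpr ⟨?_, ?_⟩ <;>
      refine (mul_eq_zero.mp ?_).resolve_right (sub_ne_zero.mpr hst)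
    · linear_combination t * h0 - h2
    · linear_combination t * h1 - h3
  simp [ha]

theorem stmt_18_general (m : ℕ) (ω : Fin m → ℕ) :
    (∀ Vc : Fin m → Submodule ℂ (Fin 4 → ℂ),
      (∀ i, finrank ℂ ↥(Vc i) = 2) →
      (∀ i j, i ≠ j → Vc i ⊓ Vc j = ⊥) →
      (∀ i, (ω i : ℚ) ≤ (∑ j, (ω j : ℚ)) / 2) →
      SubSemistable ω Vc) ∧
    ((∃ Vc : Fin m → Submodule ℂ (Fin 4 → ℂ),
        (∀ i, finrank ℂ ↥(Vc i) = 2) ∧ SubSemistable ω Vc) ↔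
      ∀ i, (ω i : ℚ) ≤ (∑ j, (ω j : ℚ)) / 2) := by
  have hdim {Vc : Fin m → Submodule ℂ (Fin 4 → ℂ)} (h2 : ∀ i, finrank ℂ ↥(Vc i) = 2)
      (i : Fin m) :
      2 * finrank ℂ ↥(Vc i) = finrank ℂ (Fin 4 → ℂ) := by
    rw [h2 i, finrank_fin_fun]
  have hplanes : Pairwise (Disjoint on fun i : Fin m => planeAt (i : ℕ)) := fun i j hij =>
    disjoint_planeAt (Nat.cast_injective.ne (Fin.val_injective.ne hij))
  refine ⟨fun Vc h2 hVc hω => ?_, fun ⟨Vc, h2, hss⟩ => ?_, fun hω => ?_⟩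
  · exact subSemistable_of_pairwise_disjoint ω (hdim h2)
      (fun i j hij => disjoint_iff.mpr (hVc i j hij)) hω
  · exact weight_le_half_sum_of_subSemistable ω (hdim h2) hss
  · exact ⟨_, fun i => finrank_planeAt _,
      subSemistable_of_pairwise_disjoint ω (hdim fun i => finrank_planeAt _) hplanes hω⟩

/-- (a) pairwise transverse 2-planes in `ℂ⁴` form a `℘_ω`-semistable
configuration whenever each weight is at most half the total weight; (b) a `℘_ω`-semistable
configuration of 2-planes in `ℂ⁴` exists iff each weight is at most half the total weight. -/
theorem stmt_18 (m : ℕ) (hm : 1 ≤ m) (ω : Fin m → ℕ) (hω : ∀ i, 0 < ω i) :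
    (∀ Vc : Fin m → Submodule ℂ (Fin 4 → ℂ),
      (∀ i, finrank ℂ ↥(Vc i) = 2) →
      (∀ i j, i ≠ j → Vc i ⊓ Vc j = ⊥) →
      (∀ i, (ω i : ℚ) ≤ (∑ j, (ω j : ℚ)) / 2) →
      SubSemistable ω Vc) ∧
    ((∃ Vc : Fin m → Submodule ℂ (Fin 4 → ℂ),
        (∀ i, finrank ℂ ↥(Vc i) = 2) ∧ SubSemistable ω Vc) ↔
      ∀ i, (ω i : ℚ) ≤ (∑ j, (ω j : ℚ)) / 2) :=
  stmt_18_general m ω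
end
end
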